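/- Let γ and ω be the one-particle reduced density matrices of two normalized states, with ω a rank-N orthogonal projection. Suppose tr γ = N. Then the trace norm difference is controlled by the Hilbert–Schmidt difference and the expected number of fluctuations: ‖γ − ω‖_tr ≤ 2√(2N) ‖γ − ω‖_HS + |tr(γ − ω)|, using that γ − ω = (1−ω)(γ−ω)(1−ω) + ω(γ−ω)ω + cross terms, each cross term of rank at most 2N. -/

import Mathlib

/-!
Write `A = γ - ω = A⁺ - A⁻`. On `ker ω` the quadratic form of `A` is that of `γ ≥ 0`, while it is
negative definite on `range A⁻`; hence `ω` is injective on `range A⁻` and `rank A⁻ ≤ N`.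
Since `tr A = 0`, the parts `A⁺` and `A⁻` have the same trace, so
`‖A‖_tr ≤ 2 ‖A⁻‖_tr ≤ 2 √N ‖A⁻‖_HS`. Finally `A⁻ = -P A P` for the orthogonal projection `P`
onto the closure of `range A⁻`, so `‖A⁻‖_HS ≤ ‖A‖_HS`.
-/

open ContinuousLinearMap
open scoped InnerProductSpace

namespace ContinuousLinearMap

variable {H : Type*} [NormedAddCommGroup H] [InnerProductSpace ℂ H] [CompleteSpace H]

theorem apply_eq_zero_of_re_inner_nonpos {T : H →L[ℂ] H} (hT : 0 ≤ T) {x : H}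
    (hx : (⟪T x, x⟫_ℂ).re ≤ 0) : T x = 0 := by
  obtain ⟨B, rfl⟩ := CStarAlgebra.nonneg_iff_eq_star_mul_self.mp hT
  change (⟪(adjoint B) (B x), x⟫_ℂ).re ≤ 0 at hx
  rw [adjoint_inner_left] at hx
  change (adjoint B) (B x) = 0
  rw [(re_inner_self_nonpos (𝕜 := ℂ)).mp hx, map_zero]

theorem eq_zero_of_mem_range_negPart {A : H →L[ℂ] H} (hA : IsSelfAdjoint A) {x : H}
    (hx : x ∈ LinearMap.range ((A⁻ : H →L[ℂ] H) : H →ₗ[ℂ] H)) (h : 0 ≤ (⟪A x, x⟫_ℂ).re) :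
    x = 0 := by
  obtain ⟨y, rfl⟩ := hx
  have hneg : 0 ≤ A⁻ := CFC.negPart_nonneg A
  have hAx : A (A⁻ y) = -A⁻ (A⁻ y) :=
    calc A (A⁻ y) = (A⁺ - A⁻) (A⁻ y) := by rw [CFC.posPart_sub_negPart A hA]
      _ = (A⁺ * A⁻) y - A⁻ (A⁻ y) := rfl
      _ = -A⁻ (A⁻ y) := by rw [CFC.posPart_mul_negPart, zero_apply, zero_sub]
  have hker : A⁻ (A⁻ y) = 0 :=
    apply_eq_zero_of_re_inner_nonpos hneg (by simpa [hAx] using h)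
  rw [← inner_self_eq_zero (𝕜 := ℂ)]
  change ⟪A⁻ y, A⁻ y⟫_ℂ = 0
  rw [((nonneg_iff_isPositive _).mp hneg).inner_left_eq_inner_right, hker, inner_zero_right]

theorem finrank_range_negPart_le {V : Type*} [AddCommGroup V] [Module ℂ V]
    {A : H →L[ℂ] H} (hA : IsSelfAdjoint A) {ω : H →ₗ[ℂ] V}
    [FiniteDimensional ℂ (LinearMap.range ω)] (h : ∀ x, ω x = 0 → 0 ≤ (⟪A x, x⟫_ℂ).re) :
    Module.finrank ℂ (LinearMap.range ((A⁻ : H →L[ℂ] H) : H →ₗ[ℂ] H)) ≤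
      Module.finrank ℂ (LinearMap.range ω) := by
  set S := LinearMap.range ((A⁻ : H →L[ℂ] H) : H →ₗ[ℂ] H)
  have hinj : Function.Injective (ω.domRestrict S) :=
    LinearMap.injective_domRestrict_iff.mpr <| Submodule.disjoint_def.mpr fun x hxS hxω =>
      eq_zero_of_mem_range_negPart hA hxS (h x hxω)
  rw [← LinearMap.finrank_range_of_inj hinj]
  exact Submodule.finrank_mono (LinearMap.range_domRestrict_le_range ω S)

theorem starProjection_comp_comp_starProjection_eq_neg_negPart {A : H →L[ℂ] H}
    (hA : IsSelfAdjoint A) (K : Submodule ℂ H) [K.HasOrthogonalProjection]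
    (h_range : LinearMap.range ((A⁻ : H →L[ℂ] H) : H →ₗ[ℂ] H) ≤ K)
    (h_ker : K ≤ LinearMap.ker ((A⁺ : H →L[ℂ] H) : H →ₗ[ℂ] H)) :
    K.starProjection ∘L A ∘L K.starProjection = -A⁻ := by
  set P := K.starProjection
  have hP_neg : P * A⁻ = A⁻ := by
    ext x
    exact K.starProjection_eq_self_iff.mpr (h_range ⟨x, rfl⟩)
  have hP : star P = P := (isSelfAdjoint_starProjection K).star_eq
  have hneg_P : A⁻ * P = A⁻ := by
    simpa only [star_mul, hP, (CFC.negPart_nonneg A).isSelfAdjoint.star_eq]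
      using congrArg star hP_neg
  have hpos_P : A⁺ * P = 0 := by
    ext x
    exact h_ker (K.starProjection_apply_mem x)
  calc P * (A * P) = P * ((A⁺ - A⁻) * P) := by rw [CFC.posPart_sub_negPart A hA]
    _ = -A⁻ := by rw [sub_mul, hpos_P, hneg_P, zero_sub, mul_neg, hP_neg]

theorem topologicalClosure_range_negPart_le_ker_posPart (A : H →L[ℂ] H) :
    (LinearMap.range ((A⁻ : H →L[ℂ] H) : H →ₗ[ℂ] H)).topologicalClosure ≤
      LinearMap.ker ((A⁺ : H →L[ℂ] H) : H →ₗ[ℂ] H) := by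
  refine Submodule.topologicalClosure_minimal _ ?_ (isClosed_ker _)
  rintro _ ⟨y, rfl⟩
  exact congrArg (· y) (CFC.posPart_mul_negPart A)

theorem apply_negPart_le_of_contractive {A : H →L[ℂ] H} (hA : IsSelfAdjoint A)
    (f : (H →L[ℂ] H) → ℝ)
    (hf : ∀ (A X Y : H →L[ℂ] H), ‖X‖ ≤ 1 → ‖Y‖ ≤ 1 → f (X ∘L A ∘L Y) ≤ f A) :
    f A⁻ ≤ f A := by
  let K := (LinearMap.range ((A⁻ : H →L[ℂ] H) : H →ₗ[ℂ] H)).topologicalClosure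
  have hP := K.starProjection_norm_le
  have := hf A (-K.starProjection) K.starProjection (by rwa [norm_neg]) hP
  rwa [neg_comp, starProjection_comp_comp_starProjection_eq_neg_negPart hA K
    (Submodule.le_topologicalClosure _) (topologicalClosure_range_negPart_le_ker_posPart A),
    neg_neg] at this

theorem le_two_mul_apply_negPart_of_trace_eq_zero {A : H →L[ℂ] H} (hA : IsSelfAdjoint A)
    (trN : (H →L[ℂ] H) → ℝ) (tr : (H →L[ℂ] H) → ℂ)
    (htri : ∀ A B, trN (A + B) ≤ trN A + trN B) (htrineg : ∀ A, trN (-A) = trN A)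
    (hposTr : ∀ T : H →L[ℂ] H, T.IsPositive → trN T = (tr T).re)
    (htradd : ∀ A B, tr (A + B) = tr A + tr B) (htrneg : ∀ A, tr (-A) = - tr A)
    (htr_zero : tr A = 0) :
    trN A ≤ 2 * trN A⁻ := by
  have hA_eq : A = A⁺ + -A⁻ := by rw [← sub_eq_add_neg, CFC.posPart_sub_negPart A hA]
  have htr_pos : tr A⁺ = tr A⁻ := by
    rwa [hA_eq, htradd, htrneg, ← sub_eq_add_neg, sub_eq_zero] at htr_zero
  calc trN A = trN (A⁺ + -A⁻) := by rw [← hA_eq]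
    _ ≤ trN A⁺ + trN A⁻ := by simpa only [htrineg] using htri A⁺ (-A⁻)
    _ = 2 * trN A⁻ := by
      rw [hposTr _ ((nonneg_iff_isPositive _).mp (CFC.posPart_nonneg A)),
        hposTr _ ((nonneg_iff_isPositive _).mp (CFC.negPart_nonneg A)), htr_pos, two_mul]

end ContinuousLinearMap

theorem trace_norm_diff_le_hs_general
    {H : Type*} [NormedAddCommGroup H] [InnerProductSpace ℂ H] [CompleteSpace H]
    (N : ℕ)
    (trN hsN : (H →L[ℂ] H) → ℝ) (tr : (H →L[ℂ] H) → ℂ)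
    (γ ω : H →L[ℂ] H)
    (hγpos : γ.IsPositive)
    (hωproj : ω ∘L ω = ω) (hωsa : IsSelfAdjoint ω)
    (hrankω : Module.finrank ℂ (LinearMap.range (ω : H →ₗ[ℂ] H)) = N)
    (htrγ : tr γ = N) (htrω : tr ω = N)
    (htri : ∀ A B, trN (A + B) ≤ trN A + trN B)
    (htrineg : ∀ A, trN (-A) = trN A)
    (hrankHS : ∀ (T : H →L[ℂ] H) (r : ℕ),
      Module.finrank ℂ (LinearMap.range (T : H →ₗ[ℂ] H)) ≤ r →
      trN T ≤ Real.sqrt r * hsN T)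
    (hposTr : ∀ T : H →L[ℂ] H, T.IsPositive → trN T = (tr T).re)
    (htradd : ∀ A B, tr (A + B) = tr A + tr B)
    (htrneg : ∀ A, tr (-A) = - tr A)
    (hhs_contract : ∀ (A X Y : H →L[ℂ] H), ‖X‖ ≤ 1 → ‖Y‖ ≤ 1 →
      hsN (X ∘L A ∘L Y) ≤ hsN A) :
    trN (γ - ω) ≤ 2 * Real.sqrt (2 * N) * hsN (γ - ω)
      + ‖tr (γ - ω)‖ := by
  rcases Nat.eq_zero_or_pos N with rfl | hN
  · -- `finrank = 0` does not make `range ω` finite-dimensional; use `tr γ = tr ω = 0` instead.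
    have hωpos : ω.IsPositive := IsPositive.of_isStarProjection ⟨hωproj, hωsa⟩
    have htrN_sub : trN (γ - ω) ≤ trN γ + trN ω := by
      simpa only [← sub_eq_add_neg, htrineg] using htri γ (-ω)
    have : trN (γ - ω) ≤ 0 := by
      simpa [hposTr γ hγpos, hposTr ω hωpos, htrγ, htrω] using htrN_sub
    simpa using this.trans (norm_nonneg (tr (γ - ω)))
  have htr_zero : tr (γ - ω) = 0 := by
    rw [sub_eq_add_neg, htradd, htrneg, htrγ, htrω, add_neg_cancel]
  set A := γ - ω
  have hA : IsSelfAdjoint A := hγpos.isSelfAdjoint.sub hωsa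
  -- The bound `rank A⁻ ≤ N` is weakened to `2 * N` to meet the stated constant without `0 ≤ hsN A`.
  have hrank : Module.finrank ℂ (LinearMap.range ((A⁻ : H →L[ℂ] H) : H →ₗ[ℂ] H)) ≤ 2 * N := by
    have : FiniteDimensional ℂ (LinearMap.range (ω : H →ₗ[ℂ] H)) :=
      Module.finite_of_finrank_pos (hrankω ▸ hN)
    refine (finrank_range_negPart_le hA (ω := (ω : H →ₗ[ℂ] H)) fun x hx => ?_).trans
      (by omega)
    have hx : ω x = 0 := hx
    simpa [A, hx] using hγpos.re_inner_nonneg_left x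
  calc trN A ≤ 2 * trN A⁻ :=
        le_two_mul_apply_negPart_of_trace_eq_zero hA trN tr htri htrineg hposTr htradd htrneg
          htr_zero
    _ ≤ 2 * (Real.sqrt (2 * N) * hsN A) := by
      gcongr
      refine (hrankHS _ _ hrank).trans ?_
      push_cast
      gcongr
      exact apply_negPart_le_of_contractive hA hsN hhs_contract
    _ ≤ 2 * Real.sqrt (2 * N) * hsN A + ‖tr A‖ := by
      rw [mul_assoc]
      exact le_add_of_nonneg_right (norm_nonneg _)

/-- **Trace-norm vs Hilbert–Schmidt control of the 1-pdm difference.** Let `γ` be a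
one-particle reduced density matrix (`0 ≤ γ ≤ 1`, `tr γ = N`) and `ω` a rank-`N`
orthogonal projection. Decomposing `γ − ω` into `(1−ω)(γ−ω)(1−ω)`, `ω(γ−ω)ω` and
cross terms of rank at most `2N`, and using that `‖T‖_tr ≤ √r ‖T‖_HS` for operators
of rank `≤ r`, one gets `‖γ − ω‖_tr ≤ 2√(2N) ‖γ − ω‖_HS + |tr(γ − ω)|`.
Here `trN`, `hsN`, `tr` are the trace norm, Hilbert–Schmidt norm and trace, with the
properties listed as hypotheses. -/
theorem trace_norm_diff_le_hs
    {H : Type*} [NormedAddCommGroup H] [InnerProductSpace ℂ H] [CompleteSpace H]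
    (N : ℕ)
    (trN hsN : (H →L[ℂ] H) → ℝ) (tr : (H →L[ℂ] H) → ℂ)
    (γ ω : H →L[ℂ] H)
    (hγpos : γ.IsPositive) (hγle : (1 - γ).IsPositive)
    (hωproj : ω ∘L ω = ω) (hωsa : IsSelfAdjoint ω)
    (hrankω : Module.finrank ℂ (LinearMap.range (ω : H →ₗ[ℂ] H)) = N)
    (htrγ : tr γ = N) (htrω : tr ω = N)
    (htri : ∀ A B, trN (A + B) ≤ trN A + trN B)
    (htrineg : ∀ A, trN (-A) = trN A)
    (hrankHS : ∀ (T : H →L[ℂ] H) (r : ℕ),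
      Module.finrank ℂ (LinearMap.range (T : H →ₗ[ℂ] H)) ≤ r →
      trN T ≤ Real.sqrt r * hsN T)
    (hposTr : ∀ T : H →L[ℂ] H, T.IsPositive → trN T = (tr T).re)
    (htradd : ∀ A B, tr (A + B) = tr A + tr B)
    (htrneg : ∀ A, tr (-A) = - tr A)
    (hcyc : ∀ A B, tr (A ∘L B) = tr (B ∘L A))
    (hhs_contract : ∀ (A X Y : H →L[ℂ] H), ‖X‖ ≤ 1 → ‖Y‖ ≤ 1 →
      hsN (X ∘L A ∘L Y) ≤ hsN A) :
    trN (γ - ω) ≤ 2 * Real.sqrt (2 * N) * hsN (γ - ω)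
      + ‖tr (γ - ω)‖ :=
  trace_norm_diff_le_hs_general N trN hsN tr γ ω hγpos hωproj hωsa hrankω htrγ htrω htri htrineg
    hrankHS hposTr htradd htrneg hhs_contract
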